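/- Identifiability for a categorical outcome (Theorem 2 of the paper): Suppose two models (Ω, ℱ, μ, G, A, Y⁰, Y¹) and (Ω', ℱ', μ', G', A', Y'⁰, Y'¹) with outcomes taking values in Fin k each satisfy Assumption 1, Assumption 2 (categorical version), and Condition 2, and have the same observed data distribution, i.e. μ(G=g, A=a, Y=y) = μ'(G'=g, A'=a, Y'=y) for all g ∈ Fin m, a ∈ {0,1}, y ∈ Fin k. Then for all i, j ∈ Fin k and every g ∈ Fin m: P(Y⁰=i, Y¹=j | G=g) = P'(Y'⁰=i, Y'¹=j | G'=g); that is, the joint distributions P(Y⁰, Y¹ | G=g) are identified from the observed data distribution. -/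

import Mathlib

/-!
Under unconfoundedness, the observed outcome law in arm `a` of trial `g` is the law of the
potential outcome `Yᵃ` given `G = g`, scaled by `P(A = a | G = g) μ(G = g) ≠ 0`; normalising
identifies `P(Y⁰ | G = g)` and `P(Y¹ | G = g)`. Transportability gives
`P(Y¹ = j | G = g) = ∑ i, P(Y⁰ = i | G = g) T i j` with `T i j = P(Y¹ = j | Y⁰ = i)`, so the full
column rank of `(P(Y⁰ = i | G = g))_{g,i}` identifies `T`, and finally
`P(Y⁰ = i, Y¹ = j | G = g) = P(Y⁰ = i | G = g) T i j`.
-/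

open MeasureTheory ProbabilityTheory

/-- Conditional probability `P(E | F) = μ(E ∩ F) / μ(F)` as a real number. -/
noncomputable def condP {Ω : Type*} [MeasurableSpace Ω] (μ : Measure Ω) (E F : Set Ω) : ℝ :=
  (μ (E ∩ F)).toReal / (μ F).toReal

theorem Matrix.mulVec_injective_of_rank_eq_card {m n K : Type*} [Fintype m] [Fintype n]
    [Field K] {M : Matrix m n K} (h : M.rank = Fintype.card n) : Function.Injective M.mulVec := by
  have hker := M.mulVecLin.finrank_range_add_finrank_ker
  rw [← Matrix.rank, h, Module.finrank_fintype_fun_eq_card, add_eq_left,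
    Submodule.finrank_eq_zero] at hker
  exact LinearMap.ker_eq_bot.mp hker

section ConditionalProbability

variable {Ω : Type*} [MeasurableSpace Ω] {μ : Measure Ω}
variable {α : Type*} [Fintype α] [MeasurableSpace α] [MeasurableSingletonClass α]

theorem measure_eq_sum_inter_preimage {f : Ω → α} (hf : Measurable f) (S : Set Ω) :
    μ S = ∑ x, μ (S ∩ {ω | f ω = x}) := by
  have := sum_measure_preimage_singleton (μ := μ.restrict S) Finset.univ
    (fun x _ => hf (measurableSet_singleton x))
  simp only [Finset.coe_univ, Set.preimage_univ, Measure.restrict_apply_univ] at this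
  rw [← this]
  refine Finset.sum_congr rfl fun x _ => ?_
  rw [Measure.restrict_apply (hf (measurableSet_singleton x)), Set.inter_comm]
  rfl

variable [IsFiniteMeasure μ]

theorem sum_condP_inter_preimage {f : Ω → α} (hf : Measurable f) (E F : Set Ω) :
    ∑ x, condP μ (E ∩ {ω | f ω = x}) F = condP μ E F := by
  simp only [condP, ← Finset.sum_div, Set.inter_right_comm _ _ F]
  rw [← ENNReal.toReal_sum fun x _ => measure_ne_top μ _, ← measure_eq_sum_inter_preimage hf]

theorem sum_condP_preimage_eq_one {f : Ω → α} (hf : Measurable f) {F : Set Ω} (hF : μ F ≠ 0) :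
    ∑ x, condP μ {ω | f ω = x} F = 1 := by
  simpa [condP, ENNReal.toReal_eq_zero_iff, hF] using sum_condP_inter_preimage (μ := μ) hf .univ F

theorem condP_mul_measure_toReal (E F : Set Ω) :
    condP μ E F * (μ F).toReal = (μ (E ∩ F)).toReal := by
  rcases eq_or_ne (μ F) 0 with hF | hF
  · simp [hF, measure_mono_null Set.inter_subset_right hF]
  · exact div_mul_cancel₀ _ (ENNReal.toReal_ne_zero.mpr ⟨hF, measure_ne_top μ F⟩)

theorem condP_inter_eq_mul (B E F : Set Ω) :
    condP μ (B ∩ E) F = condP μ B F * condP μ E (B ∩ F) := by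
  rcases eq_or_ne (μ (B ∩ F)) 0 with hB | hB
  · have : μ (B ∩ E ∩ F) = 0 := measure_mono_null (by grind) hB
    simp [condP, hB, this]
  · have hB' : (μ (B ∩ F)).toReal ≠ 0 := ENNReal.toReal_ne_zero.mpr ⟨hB, measure_ne_top μ _⟩
    have hE : E ∩ (B ∩ F) = B ∩ E ∩ F := by grind
    rw [condP, condP, condP, hE, div_mul_div_comm, mul_comm, mul_div_mul_right _ _ hB']

theorem condP_inter_eq_mul_of_forall_preimage {f : Ω → α} (hf : Measurable f) (S E F : Set Ω)
    (h : ∀ x, condP μ (S ∩ (E ∩ {ω | f ω = x})) F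
      = condP μ S F * condP μ (E ∩ {ω | f ω = x}) F) :
    condP μ (S ∩ E) F = condP μ S F * condP μ E F := by
  rw [← sum_condP_inter_preimage hf E F, Finset.mul_sum, ← sum_condP_inter_preimage hf (S ∩ E) F]
  simp only [Set.inter_assoc, h]

end ConditionalProbability

section TrialModel

variable {Ω ι β : Type*} [MeasurableSpace Ω] {μ : Measure Ω} [IsFiniteMeasure μ]
  {G : Ω → ι} {A : Ω → Bool} {Y0 Y1 Y : Ω → β}

theorem condP_joint_eq_mul_transition
    (hA2 : ∀ (i j : β) (g : ι), 0 < μ {ω | Y0 ω = i ∧ G ω = g} →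
      condP μ {ω | Y1 ω = j} {ω | Y0 ω = i ∧ G ω = g} = condP μ {ω | Y1 ω = j} {ω | Y0 ω = i})
    (i j : β) (g : ι) :
    condP μ {ω | Y0 ω = i ∧ Y1 ω = j} {ω | G ω = g} =
      condP μ {ω | Y0 ω = i} {ω | G ω = g} * condP μ {ω | Y1 ω = j} {ω | Y0 ω = i} := by
  rw [show {ω | Y0 ω = i ∧ Y1 ω = j} = {ω | Y0 ω = i} ∩ {ω | Y1 ω = j} from rfl,
    condP_inter_eq_mul]
  rcases eq_or_ne (μ {ω | Y0 ω = i ∧ G ω = g}) 0 with h | h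
  · have h' : μ ({ω | Y0 ω = i} ∩ {ω | G ω = g}) = 0 := h
    simp [condP, h']
  · rw [← hA2 i j g (pos_iff_ne_zero.mpr h)]
    rfl

theorem condP_treatment_ne_zero (hA : Measurable A) {g : ι} (hG : μ {ω | G ω = g} ≠ 0)
    (hov : 0 < condP μ {ω | A ω = true} {ω | G ω = g} ∧
      condP μ {ω | A ω = true} {ω | G ω = g} < 1) (a : Bool) :
    condP μ {ω | A ω = a} {ω | G ω = g} ≠ 0 := by
  have := sum_condP_preimage_eq_one hA hG
  rw [Fintype.sum_bool] at this
  cases a <;> linarith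

variable [Fintype β] [MeasurableSpace β] [MeasurableSingletonClass β]

theorem condP_eq_sum_mul_transition (hY0 : Measurable Y0)
    (hA2 : ∀ (i j : β) (g : ι), 0 < μ {ω | Y0 ω = i ∧ G ω = g} →
      condP μ {ω | Y1 ω = j} {ω | Y0 ω = i ∧ G ω = g} = condP μ {ω | Y1 ω = j} {ω | Y0 ω = i})
    (j : β) (g : ι) :
    condP μ {ω | Y1 ω = j} {ω | G ω = g} =
      ∑ i, condP μ {ω | Y0 ω = i} {ω | G ω = g} * condP μ {ω | Y1 ω = j} {ω | Y0 ω = i} := by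
  rw [← sum_condP_inter_preimage hY0]
  refine Finset.sum_congr rfl fun i _ => ?_
  rw [Set.inter_comm]
  exact condP_joint_eq_mul_transition hA2 i j g

theorem measure_observed_toReal_eq (hY0 : Measurable Y0) (hY1 : Measurable Y1)
    (hY : ∀ ω, Y ω = bif A ω then Y1 ω else Y0 ω)
    (hA1 : ∀ (g : ι) (a : Bool) (i j : β),
      condP μ {ω | A ω = a ∧ Y0 ω = i ∧ Y1 ω = j} {ω | G ω = g} =
        condP μ {ω | A ω = a} {ω | G ω = g} * condP μ {ω | Y0 ω = i ∧ Y1 ω = j} {ω | G ω = g})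
    (g : ι) (a : Bool) (y : β) :
    (μ {ω | G ω = g ∧ A ω = a ∧ Y ω = y}).toReal =
      condP μ {ω | A ω = a} {ω | G ω = g} * (μ {ω | G ω = g}).toReal *
        condP μ {ω | (bif a then Y1 ω else Y0 ω) = y} {ω | G ω = g} := by
  have hset : {ω | G ω = g ∧ A ω = a ∧ Y ω = y} =
      {ω | A ω = a} ∩ {ω | (bif a then Y1 ω else Y0 ω) = y} ∩ {ω | G ω = g} := by
    ext ω
    simp only [Set.mem_ofPred_eq, Set.mem_inter_iff, hY]
    grind
  have hind : condP μ ({ω | A ω = a} ∩ {ω | (bif a then Y1 ω else Y0 ω) = y}) {ω | G ω = g} =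
      condP μ {ω | A ω = a} {ω | G ω = g} *
        condP μ {ω | (bif a then Y1 ω else Y0 ω) = y} {ω | G ω = g} := by
    cases a
    · exact condP_inter_eq_mul_of_forall_preimage hY1 _ _ _ fun j => hA1 g false y j
    · refine condP_inter_eq_mul_of_forall_preimage hY0 _ _ _ fun i => ?_
      rw [Set.inter_comm {ω | (bif true then Y1 ω else Y0 ω) = y}]
      exact hA1 g true i y
  rw [hset, ← condP_mul_measure_toReal, hind]
  ring

theorem condP_potential_eq_div_sum_observed (hA : Measurable A) (hY0 : Measurable Y0)
    (hY1 : Measurable Y1) (hY : ∀ ω, Y ω = bif A ω then Y1 ω else Y0 ω) {g : ι}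
    (hG : μ {ω | G ω = g} ≠ 0)
    (hov : 0 < condP μ {ω | A ω = true} {ω | G ω = g} ∧
      condP μ {ω | A ω = true} {ω | G ω = g} < 1)
    (hA1 : ∀ (g : ι) (a : Bool) (i j : β),
      condP μ {ω | A ω = a ∧ Y0 ω = i ∧ Y1 ω = j} {ω | G ω = g} =
        condP μ {ω | A ω = a} {ω | G ω = g} * condP μ {ω | Y0 ω = i ∧ Y1 ω = j} {ω | G ω = g})
    (a : Bool) (y : β) :
    condP μ {ω | (bif a then Y1 ω else Y0 ω) = y} {ω | G ω = g} =
      (μ {ω | G ω = g ∧ A ω = a ∧ Y ω = y}).toReal /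
        ∑ y', (μ {ω | G ω = g ∧ A ω = a ∧ Y ω = y'}).toReal := by
  have hc : condP μ {ω | A ω = a} {ω | G ω = g} * (μ {ω | G ω = g}).toReal ≠ 0 :=
    mul_ne_zero (condP_treatment_ne_zero hA hG hov a)
      (ENNReal.toReal_ne_zero.mpr ⟨hG, measure_ne_top μ _⟩)
  have hsum := sum_condP_preimage_eq_one (f := fun ω => bif a then Y1 ω else Y0 ω)
    (by cases a <;> assumption) hG
  simp only [measure_observed_toReal_eq hY0 hY1 hY hA1, ← Finset.mul_sum, hsum, mul_one]
  rw [mul_div_cancel_left₀ _ hc]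

end TrialModel

theorem stmt1_general
    {Ω Ω' : Type*} [MeasurableSpace Ω] [MeasurableSpace Ω']
    (μ : Measure Ω) (μ' : Measure Ω')
    [IsProbabilityMeasure μ] [IsProbabilityMeasure μ']
    {m k : ℕ}
    (G : Ω → Fin m) (A : Ω → Bool) (Y0 Y1 Y : Ω → Fin k)
    (G' : Ω' → Fin m) (A' : Ω' → Bool) (Y0' Y1' Y' : Ω' → Fin k)
    (hAmeas : Measurable A)
    (hY0meas : Measurable Y0) (hY1meas : Measurable Y1)
    (hA'meas : Measurable A')
    (hY0'meas : Measurable Y0') (hY1'meas : Measurable Y1')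
    (hYdef : ∀ ω, Y ω = bif A ω then Y1 ω else Y0 ω)
    (hY'def : ∀ ω, Y' ω = bif A' ω then Y1' ω else Y0' ω)
    -- Assumption 1 for μ
    (hA1pos : ∀ g : Fin m, 0 < μ {ω | G ω = g})
    (hA1ov : ∀ g : Fin m, 0 < condP μ {ω | A ω = true} {ω | G ω = g} ∧
        condP μ {ω | A ω = true} {ω | G ω = g} < 1)
    (hA1ind : ∀ (g : Fin m) (a : Bool) (i j : Fin k),
      condP μ {ω | A ω = a ∧ Y0 ω = i ∧ Y1 ω = j} {ω | G ω = g} =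
        condP μ {ω | A ω = a} {ω | G ω = g} *
          condP μ {ω | Y0 ω = i ∧ Y1 ω = j} {ω | G ω = g})
    -- Assumption 1 for μ'
    (hA1pos' : ∀ g : Fin m, 0 < μ' {ω | G' ω = g})
    (hA1ov' : ∀ g : Fin m, 0 < condP μ' {ω | A' ω = true} {ω | G' ω = g} ∧
        condP μ' {ω | A' ω = true} {ω | G' ω = g} < 1)
    (hA1ind' : ∀ (g : Fin m) (a : Bool) (i j : Fin k),
      condP μ' {ω | A' ω = a ∧ Y0' ω = i ∧ Y1' ω = j} {ω | G' ω = g} =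
        condP μ' {ω | A' ω = a} {ω | G' ω = g} *
          condP μ' {ω | Y0' ω = i ∧ Y1' ω = j} {ω | G' ω = g})
    -- Assumption 2 (categorical version) for μ
    (hA2 : ∀ (i j : Fin k) (g : Fin m), 0 < μ {ω | Y0 ω = i ∧ G ω = g} →
      condP μ {ω | Y1 ω = j} {ω | Y0 ω = i ∧ G ω = g} =
        condP μ {ω | Y1 ω = j} {ω | Y0 ω = i})
    -- Assumption 2 (categorical version) for μ'
    (hA2' : ∀ (i j : Fin k) (g : Fin m), 0 < μ' {ω | Y0' ω = i ∧ G' ω = g} →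
      condP μ' {ω | Y1' ω = j} {ω | Y0' ω = i ∧ G' ω = g} =
        condP μ' {ω | Y1' ω = j} {ω | Y0' ω = i})
    -- Condition 2 for μ and μ'
    (hC2 : (Matrix.of fun (g : Fin m) (i : Fin k) =>
      condP μ {ω | Y0 ω = i} {ω | G ω = g}).rank = k)
    -- equal observed data distributions
    (hobs : ∀ (g : Fin m) (a : Bool) (y : Fin k),
      μ {ω | G ω = g ∧ A ω = a ∧ Y ω = y} = μ' {ω | G' ω = g ∧ A' ω = a ∧ Y' ω = y}) :
    ∀ (i j : Fin k) (g : Fin m),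
      condP μ {ω | Y0 ω = i ∧ Y1 ω = j} {ω | G ω = g} =
        condP μ' {ω | Y0' ω = i ∧ Y1' ω = j} {ω | G' ω = g} := by
  have hpotential : ∀ (a : Bool) (g : Fin m) (y : Fin k),
      condP μ {ω | (bif a then Y1 ω else Y0 ω) = y} {ω | G ω = g} =
        condP μ' {ω | (bif a then Y1' ω else Y0' ω) = y} {ω | G' ω = g} := by
    intro a g y
    rw [condP_potential_eq_div_sum_observed hAmeas hY0meas hY1meas hYdef (hA1pos g).ne' (hA1ov g)
        hA1ind, condP_potential_eq_div_sum_observed hA'meas hY0'meas hY1'meas hY'def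
        (hA1pos' g).ne' (hA1ov' g) hA1ind']
    simp only [hobs]
  have hY0law : ∀ g i, condP μ {ω | Y0 ω = i} {ω | G ω = g} =
      condP μ' {ω | Y0' ω = i} {ω | G' ω = g} := hpotential false
  have hY1law : ∀ g j, condP μ {ω | Y1 ω = j} {ω | G ω = g} =
      condP μ' {ω | Y1' ω = j} {ω | G' ω = g} := hpotential true
  have htransition : ∀ i j, condP μ {ω | Y1 ω = j} {ω | Y0 ω = i} =
      condP μ' {ω | Y1' ω = j} {ω | Y0' ω = i} := by
    intro i j
    suffices hcol : (fun i => condP μ {ω | Y1 ω = j} {ω | Y0 ω = i}) =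
        fun i => condP μ' {ω | Y1' ω = j} {ω | Y0' ω = i} from congrFun hcol i
    refine Matrix.mulVec_injective_of_rank_eq_card (hC2.trans (Fintype.card_fin k).symm) ?_
    funext g
    simp only [Matrix.mulVec, dotProduct, Matrix.of_apply]
    rw [← condP_eq_sum_mul_transition hY0meas hA2, hY1law]
    simp only [hY0law]
    rw [← condP_eq_sum_mul_transition hY0'meas hA2']
  intro i j g
  rw [condP_joint_eq_mul_transition hA2, condP_joint_eq_mul_transition hA2', hY0law, htransition]

/-- **Theorem 2 (categorical outcome).** For an outcome with `k` categories, under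
Assumption 1, the categorical version of Assumption 2, and Condition 2 (the `m × k`
matrix of `P(Y⁰ = i | G = g)` has full column rank `k`), the joint distributions
`P(Y⁰, Y¹ | G = g)` are identified from the observed data distribution. -/
theorem stmt1
    {Ω Ω' : Type*} [MeasurableSpace Ω] [MeasurableSpace Ω']
    (μ : Measure Ω) (μ' : Measure Ω')
    [IsProbabilityMeasure μ] [IsProbabilityMeasure μ']
    {m k : ℕ} (hm : 1 ≤ m) (hk : 1 ≤ k)
    (G : Ω → Fin m) (A : Ω → Bool) (Y0 Y1 Y : Ω → Fin k)
    (G' : Ω' → Fin m) (A' : Ω' → Bool) (Y0' Y1' Y' : Ω' → Fin k)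
    (hGmeas : Measurable G) (hAmeas : Measurable A)
    (hY0meas : Measurable Y0) (hY1meas : Measurable Y1)
    (hG'meas : Measurable G') (hA'meas : Measurable A')
    (hY0'meas : Measurable Y0') (hY1'meas : Measurable Y1')
    (hYdef : ∀ ω, Y ω = bif A ω then Y1 ω else Y0 ω)
    (hY'def : ∀ ω, Y' ω = bif A' ω then Y1' ω else Y0' ω)
    -- Assumption 1 for μ
    (hA1pos : ∀ g : Fin m, 0 < μ {ω | G ω = g})
    (hA1ov : ∀ g : Fin m, 0 < condP μ {ω | A ω = true} {ω | G ω = g} ∧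
        condP μ {ω | A ω = true} {ω | G ω = g} < 1)
    (hA1ind : ∀ (g : Fin m) (a : Bool) (i j : Fin k),
      condP μ {ω | A ω = a ∧ Y0 ω = i ∧ Y1 ω = j} {ω | G ω = g} =
        condP μ {ω | A ω = a} {ω | G ω = g} *
          condP μ {ω | Y0 ω = i ∧ Y1 ω = j} {ω | G ω = g})
    -- Assumption 1 for μ'
    (hA1pos' : ∀ g : Fin m, 0 < μ' {ω | G' ω = g})
    (hA1ov' : ∀ g : Fin m, 0 < condP μ' {ω | A' ω = true} {ω | G' ω = g} ∧
        condP μ' {ω | A' ω = true} {ω | G' ω = g} < 1)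
    (hA1ind' : ∀ (g : Fin m) (a : Bool) (i j : Fin k),
      condP μ' {ω | A' ω = a ∧ Y0' ω = i ∧ Y1' ω = j} {ω | G' ω = g} =
        condP μ' {ω | A' ω = a} {ω | G' ω = g} *
          condP μ' {ω | Y0' ω = i ∧ Y1' ω = j} {ω | G' ω = g})
    -- Assumption 2 (categorical version) for μ
    (hA2pos : ∀ i : Fin k, 0 < μ {ω | Y0 ω = i})
    (hA2 : ∀ (i j : Fin k) (g : Fin m), 0 < μ {ω | Y0 ω = i ∧ G ω = g} →
      condP μ {ω | Y1 ω = j} {ω | Y0 ω = i ∧ G ω = g} =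
        condP μ {ω | Y1 ω = j} {ω | Y0 ω = i})
    -- Assumption 2 (categorical version) for μ'
    (hA2pos' : ∀ i : Fin k, 0 < μ' {ω | Y0' ω = i})
    (hA2' : ∀ (i j : Fin k) (g : Fin m), 0 < μ' {ω | Y0' ω = i ∧ G' ω = g} →
      condP μ' {ω | Y1' ω = j} {ω | Y0' ω = i ∧ G' ω = g} =
        condP μ' {ω | Y1' ω = j} {ω | Y0' ω = i})
    -- Condition 2 for μ and μ'
    (hC2 : (Matrix.of fun (g : Fin m) (i : Fin k) =>
      condP μ {ω | Y0 ω = i} {ω | G ω = g}).rank = k)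
    (hC2' : (Matrix.of fun (g : Fin m) (i : Fin k) =>
      condP μ' {ω | Y0' ω = i} {ω | G' ω = g}).rank = k)
    -- equal observed data distributions
    (hobs : ∀ (g : Fin m) (a : Bool) (y : Fin k),
      μ {ω | G ω = g ∧ A ω = a ∧ Y ω = y} = μ' {ω | G' ω = g ∧ A' ω = a ∧ Y' ω = y}) :
    ∀ (i j : Fin k) (g : Fin m),
      condP μ {ω | Y0 ω = i ∧ Y1 ω = j} {ω | G ω = g} =
        condP μ' {ω | Y0' ω = i ∧ Y1' ω = j} {ω | G' ω = g} :=
  stmt1_general μ μ' G A Y0 Y1 Y G' A' Y0' Y1' Y' hAmeas hY0meas hY1meas hA'meas hY0'meas hY1'meas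
    hYdef hY'def hA1pos hA1ov hA1ind hA1pos' hA1ov' hA1ind' hA2 hA2' hC2 hobs
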